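/- arXiv:1203.5547 — 3 statements merged into one kernel-verified Lean document; each statement's English description precedes it below -/
import Mathlib

section
/- Let x₁, x₂ ∈ ℂ² be unit vectors and let B₁, B₂ ∈ M₂(ℂ) be density matrices. Then ‖x₁x₁ᴴ − t·x₂x₂ᴴ‖₁ ≥ ‖B₁ − t·B₂‖₁ for all real t ≥ 0 if and only if |x₁ᴴx₂| ≤ ‖√B₁ · √B₂‖₁. -/
open Matrix
open scoped ComplexOrder

/-- The square root of a positive semidefinite matrix, as defined in the older Mathlib. -/
noncomputable def Matrix.PosSemidef.sqrt {n 𝕜 : Type*} [Fintype n] [RCLike 𝕜] [DecidableEq n]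
    {A : Matrix n n 𝕜} (hA : Matrix.PosSemidef A) : Matrix n n 𝕜 :=
  hA.1.eigenvectorUnitary.1 * diagonal ((↑) ∘ (√·) ∘ hA.1.eigenvalues) *
    (star hA.1.eigenvectorUnitary : Matrix n n 𝕜)

/-- The trace norm of a complex matrix: `tr √(XᴴX)`, the sum of singular values. -/
noncomputable def traceNorm {p q : ℕ} (X : Matrix (Fin p) (Fin q) ℂ) : ℝ :=
  ((Matrix.posSemidef_conjTranspose_mul_self X).sqrt.trace).re

/-! For a `2 × 2` matrix, `‖X‖₁² = tr (XᴴX) + 2 |det X|`, since `(tr S)² = tr S² + 2 det S` for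
`S = |X|`. Both `B₁ - t B₂` and `x₁x₁ᴴ - t x₂x₂ᴴ` have trace `1 - t`, so the inequality at `t`
compares determinants only; with `dᵢ = det Bᵢ`, `m = tr (B₁B₂)` and `c = |x₁ᴴx₂|` it becomes
`0 ≤ d₁ + (m - c²) t + d₂ t²`. This holds for all `t ≥ 0` iff `m - c² ≥ -2 √d₁ √d₂`, while
`‖√B₁ √B₂‖₁² = m + 2 √d₁ √d₂`. -/

open scoped MatrixOrder

namespace Matrix

section CFC

variable {n 𝕜 : Type*} [Fintype n] [RCLike 𝕜] [DecidableEq n]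

lemma PosSemidef.sqrt_eq_cfcSqrt {A : Matrix n n 𝕜} (hA : A.PosSemidef) :
    hA.sqrt = CFC.sqrt A := by
  rw [CFC.sqrt_eq_real_sqrt A hA.nonneg, cfcₙ_eq_cfc, hA.1.cfc_eq, IsHermitian.cfc,
    Unitary.conjStarAlgAut_apply]
  rfl

lemma trace_conjTranspose_mul_self_sqrt_mul_sqrt {A B : Matrix n n 𝕜} (hA : A.PosSemidef)
    (hB : B.PosSemidef) :
    ((CFC.sqrt A * CFC.sqrt B)ᴴ * (CFC.sqrt A * CFC.sqrt B)).trace = (A * B).trace := by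
  rw [← star_eq_conjTranspose, star_mul, (CFC.sqrt_nonneg A).isSelfAdjoint.star_eq,
    (CFC.sqrt_nonneg B).isSelfAdjoint.star_eq, Matrix.mul_assoc, ← Matrix.mul_assoc (CFC.sqrt A),
    CFC.sqrt_mul_sqrt_self A hA.nonneg, trace_mul_comm, Matrix.mul_assoc,
    CFC.sqrt_mul_sqrt_self B hB.nonneg]

lemma PosSemidef.trace_mul_nonneg {A B : Matrix n n 𝕜} (hA : A.PosSemidef)
    (hB : B.PosSemidef) : 0 ≤ (A * B).trace :=
  trace_conjTranspose_mul_self_sqrt_mul_sqrt hA hB ▸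
    (posSemidef_conjTranspose_mul_self _).trace_nonneg

lemma det_abs (X : Matrix n n 𝕜) : (CFC.abs X).det = ‖X.det‖ := by
  obtain ⟨s, hs, hs_eq⟩ :=
    RCLike.nonneg_iff_exists_ofReal.mp (CFC.abs_nonneg X).posSemidef.det_nonneg
  have hsq : ((s * s : ℝ) : 𝕜) = ((‖X.det‖ * ‖X.det‖ : ℝ) : 𝕜) := by
    rw [RCLike.ofReal_mul, hs_eq, ← det_mul, CFC.abs_mul_abs, det_mul, star_eq_conjTranspose,
      det_conjTranspose, RCLike.star_def, RCLike.conj_mul]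
    push_cast
    ring
  rw [← hs_eq, (mul_self_inj hs (norm_nonneg _)).mp (RCLike.ofReal_injective hsq)]

end CFC

section FinTwo

variable {R : Type*} [CommRing R]

lemma trace_mul_self_fin_two (M : Matrix (Fin 2) (Fin 2) R) :
    (M * M).trace = M.trace ^ 2 - 2 * M.det := by
  simp only [trace_fin_two, det_fin_two, mul_apply, Fin.sum_univ_two]
  ring

lemma det_sub_smul_fin_two (A B : Matrix (Fin 2) (Fin 2) R) (z : R) :
    (A - z • B).det = A.det + z ^ 2 * B.det - z * (A.trace * B.trace - (A * B).trace) := by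
  simp only [det_fin_two, trace_fin_two, mul_apply, Fin.sum_univ_two, sub_apply, smul_apply,
    smul_eq_mul]
  ring

end FinTwo

lemma IsHermitian.sub_ofReal_smul {n : Type*} {A B : Matrix n n ℂ} (hA : A.IsHermitian)
    (hB : B.IsHermitian) (t : ℝ) : (A - (t : ℂ) • B).IsHermitian :=
  hA.sub (hB.smul (Complex.conj_ofReal t))

end Matrix

lemma Complex.exists_eq_ofReal_of_nonneg {z : ℂ} (hz : 0 ≤ z) : ∃ r : ℝ, 0 ≤ r ∧ z = r :=
  ⟨z.re, (nonneg_iff.mp hz).1, eq_re_of_ofReal_le (r := 0) (by simpa using hz)⟩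

lemma traceNorm_eq_re_trace_abs {n : ℕ} (X : Matrix (Fin n) (Fin n) ℂ) :
    traceNorm X = (CFC.abs X).trace.re := by
  rw [traceNorm, PosSemidef.sqrt_eq_cfcSqrt]
  rfl

lemma traceNorm_fin_two (X : Matrix (Fin 2) (Fin 2) ℂ) :
    traceNorm X = √((Xᴴ * X).trace.re + 2 * ‖X.det‖) := by
  obtain ⟨τ, hτ, htr⟩ :=
    Complex.exists_eq_ofReal_of_nonneg (CFC.abs_nonneg X).posSemidef.trace_nonneg
  have hsq : (Xᴴ * X).trace + 2 * ‖X.det‖ = ((τ ^ 2 : ℝ) : ℂ) := by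
    rw [← star_eq_conjTranspose, ← CFC.abs_mul_abs, trace_mul_self_fin_two, det_abs, htr,
      RCLike.ofReal_eq_complex_ofReal]
    push_cast
    ring
  rw [traceNorm_eq_re_trace_abs, htr, Complex.ofReal_re, ← Real.sqrt_sq hτ]
  congr 1
  exact_mod_cast (congrArg Complex.re hsq).symm

lemma traceNorm_fin_two_of_isHermitian {X : Matrix (Fin 2) (Fin 2) ℂ} (hX : X.IsHermitian)
    {r d : ℝ} (htr : X.trace = r) (hdet : X.det = d) :
    traceNorm X = √(r ^ 2 - 2 * d + 2 * |d|) := by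
  rw [traceNorm_fin_two, hX.eq, trace_mul_self_fin_two, htr, hdet, Complex.norm_real,
    Real.norm_eq_abs]
  congr 2
  simp [sq]

lemma traceNorm_sqrt_mul_sqrt_fin_two {B₁ B₂ : Matrix (Fin 2) (Fin 2) ℂ} (hB₁ : B₁.PosSemidef)
    (hB₂ : B₂.PosSemidef) {d₁ d₂ m : ℝ} (hd₁ : B₁.det = d₁) (hd₂ : B₂.det = d₂)
    (hm : (B₁ * B₂).trace = m) :
    traceNorm (CFC.sqrt B₁ * CFC.sqrt B₂) = √(m + 2 * (√d₁ * √d₂)) := by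
  rw [traceNorm_fin_two, trace_conjTranspose_mul_self_sqrt_mul_sqrt hB₁ hB₂, hm, det_mul,
    hB₁.det_sqrt, hB₂.det_sqrt, RCLike.sqrt_of_nonneg hB₁.det_nonneg,
    RCLike.sqrt_of_nonneg hB₂.det_nonneg, hd₁, hd₂]
  simp [abs_of_nonneg (Real.sqrt_nonneg _)]

lemma norm_star_dotProduct_le_one {n : Type*} [Fintype n] {x y : n → ℂ}
    (hx : star x ⬝ᵥ x = 1) (hy : star y ⬝ᵥ y = 1) : ‖star x ⬝ᵥ y‖ ≤ 1 := by
  have hnorm : ∀ v : n → ℂ, star v ⬝ᵥ v = 1 → ‖WithLp.toLp 2 v‖ = 1 := fun v hv => by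
    rw [norm_eq_sqrt_re_inner (𝕜 := ℂ), EuclideanSpace.inner_toLp_toLp, dotProduct_comm, hv]
    simp
  simpa [EuclideanSpace.inner_toLp_toLp, dotProduct_comm, hnorm x hx, hnorm y hy] using
    norm_inner_le_norm (𝕜 := ℂ) (WithLp.toLp 2 x) (WithLp.toLp 2 y)

lemma traceNorm_vecMulVec_sub_smul {x₁ x₂ : Fin 2 → ℂ} (hx₁ : star x₁ ⬝ᵥ x₁ = 1)
    (hx₂ : star x₂ ⬝ᵥ x₂ = 1) {t : ℝ} (ht : 0 ≤ t) :
    traceNorm (vecMulVec x₁ (star x₁) - (t : ℂ) • vecMulVec x₂ (star x₂)) =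
      √((1 - t) ^ 2 + 4 * t * (1 - ‖star x₁ ⬝ᵥ x₂‖ ^ 2)) := by
  have htr : ∀ x : Fin 2 → ℂ, star x ⬝ᵥ x = 1 → (vecMulVec x (star x)).trace = 1 := fun x hx => by
    rw [trace_vecMulVec, dotProduct_comm, hx]
  have htr₁₂ : (vecMulVec x₁ (star x₁) * vecMulVec x₂ (star x₂)).trace =
      ((‖star x₁ ⬝ᵥ x₂‖ ^ 2 : ℝ) : ℂ) := by
    rw [vecMulVec_mul_vecMulVec, trace_vecMulVec, dotProduct_smul, smul_eq_mul, dotProduct_star,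
      dotProduct_comm x₂, Complex.star_def, Complex.mul_conj']
    push_cast
    rfl
  have hc : 0 ≤ t * (1 - ‖star x₁ ⬝ᵥ x₂‖ ^ 2) :=
    mul_nonneg ht (by nlinarith [norm_star_dotProduct_le_one hx₁ hx₂, norm_nonneg (star x₁ ⬝ᵥ x₂)])
  rw [traceNorm_fin_two_of_isHermitian (r := 1 - t) (d := -(t * (1 - ‖star x₁ ⬝ᵥ x₂‖ ^ 2)))
    (IsHermitian.sub_ofReal_smul (posSemidef_vecMulVec_self_star x₁).isHermitian
      (posSemidef_vecMulVec_self_star x₂).isHermitian t)]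
  · rw [abs_of_nonpos (neg_nonpos.mpr hc)]
    ring_nf
  · rw [trace_sub, trace_smul, htr x₁ hx₁, htr x₂ hx₂, smul_eq_mul]
    push_cast
    ring
  · rw [det_sub_smul_fin_two, det_vecMulVec, det_vecMulVec, htr x₁ hx₁, htr x₂ hx₂, htr₁₂]
    push_cast
    ring

lemma traceNorm_sub_smul_of_trace_eq_one {B₁ B₂ : Matrix (Fin 2) (Fin 2) ℂ}
    (hB₁ : B₁.IsHermitian) (hB₂ : B₂.IsHermitian) (hB₁t : B₁.trace = 1) (hB₂t : B₂.trace = 1)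
    {d₁ d₂ m : ℝ} (hd₁ : B₁.det = d₁) (hd₂ : B₂.det = d₂) (hm : (B₁ * B₂).trace = m) (t : ℝ) :
    traceNorm (B₁ - (t : ℂ) • B₂) =
      √((1 - t) ^ 2 - 2 * (d₂ * t ^ 2 + (m - 1) * t + d₁) +
        2 * |d₂ * t ^ 2 + (m - 1) * t + d₁|) := by
  apply traceNorm_fin_two_of_isHermitian (IsHermitian.sub_ofReal_smul hB₁ hB₂ t)
  · rw [trace_sub, trace_smul, hB₁t, hB₂t, smul_eq_mul]
    push_cast
    ring
  · rw [det_sub_smul_fin_two, hd₁, hd₂, hB₁t, hB₂t, hm]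
    push_cast
    ring

lemma forall_nonneg_quadratic_iff {a b c : ℝ} (ha : 0 ≤ a) (hc : 0 ≤ c) :
    (∀ t : ℝ, 0 ≤ t → 0 ≤ a + b * t + c * t ^ 2) ↔ -(2 * (√a * √c)) ≤ b := by
  have hsa := Real.sq_sqrt ha
  have hsc := Real.sq_sqrt hc
  refine ⟨fun h => ?_, fun hb t ht => ?_⟩
  · by_contra! hb
    have hroot : 2 * (√a * √c) < -b := by linarith
    have hb0 : b < 0 := by nlinarith [Real.sqrt_nonneg a, Real.sqrt_nonneg c]
    rcases hc.eq_or_lt with rfl | hc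
    · have hval : b * ((a + 1) / -b) = -(a + 1) := by
        rw [mul_div_assoc', div_neg, mul_div_cancel_left₀ _ hb0.ne]
      linarith [h ((a + 1) / -b) (div_nonneg (by linarith) (by linarith))]
    · have hdisc : 4 * a * c < b ^ 2 := by
        have h4ac : 2 * (√a * √c) * (2 * (√a * √c)) = 4 * a * c := by
          linear_combination (4 * √c ^ 2) * hsa + (4 * a) * hsc
        nlinarith [mul_self_lt_mul_self (by positivity) hroot]
      have hval : a + b * (-b / (2 * c)) + c * (-b / (2 * c)) ^ 2 = a - b ^ 2 / (4 * c) := by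
        field_simp
        ring
      have := h (-b / (2 * c)) (div_nonneg (by linarith) (by linarith))
      rw [hval, sub_nonneg, div_le_iff₀ (by positivity)] at this
      linarith
  · nlinarith [sq_nonneg (√c * t - √a), Real.sqrt_nonneg a, Real.sqrt_nonneg c]

/-- For unit vectors `x₁, x₂ ∈ ℂ²` and qubit density matrices `B₁, B₂`:
`‖x₁x₁ᴴ - t x₂x₂ᴴ‖₁ ≥ ‖B₁ - t B₂‖₁` for all `t ≥ 0` iff `|x₁ᴴx₂| ≤ ‖√B₁ √B₂‖₁`. -/
theorem stmt_2 (x₁ x₂ : Fin 2 → ℂ) (hx₁ : star x₁ ⬝ᵥ x₁ = 1) (hx₂ : star x₂ ⬝ᵥ x₂ = 1)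
    (B₁ B₂ : Matrix (Fin 2) (Fin 2) ℂ)
    (hB₁ : B₁.PosSemidef) (hB₁t : B₁.trace = 1)
    (hB₂ : B₂.PosSemidef) (hB₂t : B₂.trace = 1) :
    (∀ t : ℝ, 0 ≤ t →
        traceNorm (B₁ - (t : ℂ) • B₂) ≤
          traceNorm (vecMulVec x₁ (star x₁) - (t : ℂ) • vecMulVec x₂ (star x₂))) ↔
    ‖star x₁ ⬝ᵥ x₂‖ ≤ traceNorm (hB₁.sqrt * hB₂.sqrt) := by
  obtain ⟨d₁, hd₁, hd₁_eq⟩ := Complex.exists_eq_ofReal_of_nonneg hB₁.det_nonneg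
  obtain ⟨d₂, hd₂, hd₂_eq⟩ := Complex.exists_eq_ofReal_of_nonneg hB₂.det_nonneg
  obtain ⟨m, hm, hm_eq⟩ := Complex.exists_eq_ofReal_of_nonneg (hB₁.trace_mul_nonneg hB₂)
  have hc := norm_star_dotProduct_le_one hx₁ hx₂
  have hc0 := norm_nonneg (star x₁ ⬝ᵥ x₂)
  rw [hB₁.sqrt_eq_cfcSqrt, hB₂.sqrt_eq_cfcSqrt,
    traceNorm_sqrt_mul_sqrt_fin_two hB₁ hB₂ hd₁_eq hd₂_eq hm_eq,
    Real.le_sqrt hc0 (by positivity), ← neg_le_sub_iff_le_add,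
    ← forall_nonneg_quadratic_iff hd₁ hd₂]
  refine forall₂_congr fun t ht => ?_
  have hgap : 0 ≤ t * (1 - ‖star x₁ ⬝ᵥ x₂‖ ^ 2) := mul_nonneg ht (by nlinarith)
  rw [traceNorm_sub_smul_of_trace_eq_one hB₁.isHermitian hB₂.isHermitian hB₁t hB₂t
      hd₁_eq hd₂_eq hm_eq,
    traceNorm_vecMulVec_sub_smul hx₁ hx₂ ht, Real.sqrt_le_sqrt_iff (by nlinarith)]
  rcases abs_cases (d₂ * t ^ 2 + (m - 1) * t + d₁) with ⟨habs, hsign⟩ | ⟨habs, hsign⟩ <;>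
    rw [habs] <;> constructor <;> intro <;> nlinarith
end

section
/- Let A₁,…,A_k ∈ M_n(ℂ) and B₁,…,B_k ∈ M_m(ℂ) be density matrices. There exists a trace-preserving completely positive map T : M_n(ℂ) → M_m(ℂ) with T(A_i) = B_i for i = 1,…,k if and only if there exist positive integers r and s with ms ≥ n, vectors x_{ji} ∈ ℂⁿ (for j = 1,…,r, i = 1,…,k) with A_i = ∑_{j=1}^r x_{ji}x_{ji}ᴴ, vectors y_{ji}^t ∈ ℂᵐ (for j = 1,…,r, i = 1,…,k, t = 1,…,s) with B_i = ∑_{j=1}^r ∑_{t=1}^s y_{ji}^t (y_{ji}^t)ᴴ, and a unitary matrix U ∈ M_{ms}(ℂ) such that for all j, i, U applied to the vector obtained from x_{ji} by appending ms − n zero entries equals the vector in ℂ^{ms} obtained by stacking y_{ji}^1,…,y_{ji}^s. -/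
open Matrix
open scoped ComplexOrder

/-! Stacking Kraus operators `F₁, …, F_s ∈ ℂ^{m×n}` gives an `ms × n` matrix `V` with
`Vᴴ V = ∑ F_tᴴ F_t`, so trace preservation says exactly that `V` is an isometry, i.e. that `V`
consists of the first `n` columns of a unitary `U` on `ℂ^{ms}` (which forces `n ≤ ms`). Then
`F_t x` is the `t`-th block of `U (x ⊕ 0)`, and `F_t (∑_j x_j x_jᴴ) F_tᴴ = ∑_j (F_t x_j)(F_t x_j)ᴴ`;
writing each `A_i ⪰ 0` as a sum `∑_j x_{ji} x_{ji}ᴴ` turns a Kraus family into the data on the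
right-hand side, and conversely the blocks of `U` restricted to `ℂⁿ` form a Kraus family. -/

/-- The vector in `ℂ^N` obtained from `v ∈ ℂⁿ` by appending `N - n` zero entries. -/
def padVec {n : ℕ} (N : ℕ) (v : Fin n → ℂ) : Fin N → ℂ := fun a =>
  if h : (a : ℕ) < n then v ⟨a, h⟩ else 0

/-- The vector in `ℂ^{m·s}` obtained by stacking the vectors `y 0, …, y (s-1) ∈ ℂᵐ`. -/
def stackVec {m s : ℕ} (y : Fin s → Fin m → ℂ) : Fin (m * s) → ℂ := fun a =>
  if hm : 0 < m then
    y ⟨(a : ℕ) / m, by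
        rw [Nat.div_lt_iff_lt_mul hm]
        exact lt_of_lt_of_eq a.isLt (Nat.mul_comm m s)⟩
      ⟨(a : ℕ) % m, Nat.mod_lt _ hm⟩
  else 0

section Stacking

variable {m n s : ℕ}

def finStackEquiv (m s : ℕ) : Fin s × Fin m ≃ Fin (m * s) :=
  finProdFinEquiv.trans (finCongr (Nat.mul_comm s m))

@[simp]
lemma stackVec_finStackEquiv (y : Fin s → Fin m → ℂ) (t : Fin s) (p : Fin m) :
    stackVec y (finStackEquiv m s (t, p)) = y t p := by
  have hm : 0 < m := p.pos
  simp only [stackVec, dif_pos hm, finStackEquiv, Equiv.trans_apply, finProdFinEquiv_apply_val,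
    finCongr_apply, Fin.val_cast]
  congr 1 <;> ext <;>
    simp [Nat.add_mul_div_left _ _ hm, Nat.div_eq_of_lt p.isLt, Nat.mod_eq_of_lt p.isLt]

lemma stackVec_injective : Function.Injective (stackVec (m := m) (s := s)) := fun y z h =>
  funext₂ fun t p => by simpa using congrFun h (finStackEquiv m s (t, p))

def stackMatrix (F : Fin s → Matrix (Fin m) (Fin n) ℂ) : Matrix (Fin (m * s)) (Fin n) ℂ :=
  of fun a q => stackVec (fun t p => F t p q) a

def unstackMatrix (W : Matrix (Fin (m * s)) (Fin n) ℂ) (t : Fin s) : Matrix (Fin m) (Fin n) ℂ :=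
  of fun p q => W (finStackEquiv m s (t, p)) q

lemma stackMatrix_unstackMatrix (W : Matrix (Fin (m * s)) (Fin n) ℂ) :
    stackMatrix (unstackMatrix W) = W := by
  ext a q
  obtain ⟨⟨t, p⟩, rfl⟩ := (finStackEquiv m s).surjective a
  simp [stackMatrix, unstackMatrix]

lemma stackMatrix_mulVec (F : Fin s → Matrix (Fin m) (Fin n) ℂ) (u : Fin n → ℂ) :
    stackMatrix F *ᵥ u = stackVec fun t => F t *ᵥ u := by
  ext a
  obtain ⟨⟨t, p⟩, rfl⟩ := (finStackEquiv m s).surjective a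
  simp [stackMatrix, mulVec, dotProduct]

lemma conjTranspose_stackMatrix_mul_self (F : Fin s → Matrix (Fin m) (Fin n) ℂ) :
    (stackMatrix F)ᴴ * stackMatrix F = ∑ t, (F t)ᴴ * F t := by
  ext q q'
  simp [mul_apply, ← (finStackEquiv m s).sum_comp, Fintype.sum_prod_type, stackMatrix,
    Matrix.sum_apply]

end Stacking

lemma mulVec_padVec {n N : ℕ} (h : n ≤ N) (U : Matrix (Fin N) (Fin N) ℂ) (u : Fin n → ℂ) :
    U *ᵥ padVec N u = U.submatrix id (Fin.castLE h) *ᵥ u := by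
  ext a
  refine (Fintype.sum_of_injective (Fin.castLE h) (Fin.castLE_injective h) _ _ ?_ ?_).symm
  · rintro b hb
    have : ¬ (b : ℕ) < n := fun hbn => hb ⟨⟨b, hbn⟩, rfl⟩
    simp [padVec, this]
  · intro q
    simp [padVec]

lemma card_le_card_of_conjTranspose_mul_self_eq_one {ι κ 𝕜 : Type*} [Fintype ι] [Fintype κ]
    [DecidableEq ι] [RCLike 𝕜] {V : Matrix κ ι 𝕜} (hV : Vᴴ * V = 1) :
    Fintype.card ι ≤ Fintype.card κ := by
  calc Fintype.card ι = (Vᴴ * V).rank := by rw [hV, rank_one]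
    _ ≤ V.rank := rank_mul_le_right _ _
    _ ≤ Fintype.card κ := rank_le_card_height V

lemma exists_mem_unitaryGroup_submatrix_eq {ι κ 𝕜 : Type*} [Fintype ι] [Fintype κ]
    [DecidableEq ι] [DecidableEq κ] [RCLike 𝕜] {V : Matrix κ ι 𝕜} (hV : Vᴴ * V = 1)
    {e : ι → κ} (he : Function.Injective e) :
    ∃ U ∈ unitaryGroup κ 𝕜, U.submatrix id e = V := by
  let col : ι → EuclideanSpace 𝕜 κ := fun i => WithLp.toLp 2 fun a => V a i
  have hcol : Orthonormal 𝕜 col := by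
    rw [← gram_eq_one_iff_orthonormal, gram_eq_conjTranspose_mul (EuclideanSpace.basisFun κ 𝕜)]
    convert hV <;> rfl
  have hext : Orthonormal 𝕜 ((Set.range e).domRestrict (Function.extend e col 0)) := by
    convert hcol.comp _ (Equiv.ofInjective e he).symm.injective
    ext ⟨_, i, rfl⟩ : 1
    simp [Set.domRestrict_apply, he.extend_apply]
  obtain ⟨b, hb⟩ := hext.exists_orthonormalBasis_extension_of_card_eq (by simp)
  refine ⟨(EuclideanSpace.basisFun κ 𝕜).toBasis.toMatrix b,
    (EuclideanSpace.basisFun κ 𝕜).toMatrix_orthonormalBasis_mem_unitary b, ?_⟩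
  ext a i
  rw [submatrix_apply, Module.Basis.toMatrix_apply, hb (e i) ⟨i, rfl⟩, he.extend_apply]
  rfl

lemma conjTranspose_submatrix_mul_self_eq_one {ι κ α : Type*} [Fintype κ] [DecidableEq ι]
    [DecidableEq κ] [Semiring α] [StarRing α] {U : Matrix κ κ α} (hU : Uᴴ * U = 1) {e : ι → κ}
    (he : Function.Injective e) : (U.submatrix id e)ᴴ * U.submatrix id e = 1 := by
  rw [conjTranspose_submatrix, ← submatrix_mul _ _ _ _ _ Function.bijective_id, hU,
    submatrix_one _ he]

lemma Matrix.PosSemidef.exists_eq_sum_vecMulVec {ι 𝕜 : Type*} [Fintype ι] [DecidableEq ι]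
    [RCLike 𝕜] {A : Matrix ι ι 𝕜} (hA : A.PosSemidef) :
    ∃ x : ι → ι → 𝕜, A = ∑ j, vecMulVec (x j) (star (x j)) := by
  open scoped MatrixOrder Matrix.Norms.L2Operator in
  obtain ⟨C, rfl⟩ := CStarAlgebra.nonneg_iff_eq_star_mul_self.mp hA.nonneg
  refine ⟨fun j => star (C j), ?_⟩
  ext p q
  simp [mul_apply, vecMulVec_apply, Matrix.sum_apply]

lemma sum_mul_sum_vecMulVec_mul_conjTranspose {ι τ l n α : Type*} [Fintype ι] [Fintype τ]
    [Fintype n] [Semiring α] [StarRing α] (F : τ → Matrix l n α) (x : ι → n → α) :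
    ∑ t, F t * (∑ j, vecMulVec (x j) (star (x j))) * (F t)ᴴ =
      ∑ j, ∑ t, vecMulVec (F t *ᵥ x j) (star (F t *ᵥ x j)) := by
  simp only [Matrix.mul_sum, Matrix.sum_mul, mul_vecMulVec, vecMulVec_mul, star_mulVec]
  exact Finset.sum_comm

theorem stmt_9_general {n m k : ℕ}
    (A : Fin k → Matrix (Fin n) (Fin n) ℂ) (B : Fin k → Matrix (Fin m) (Fin m) ℂ)
    (hA : ∀ i, (A i).PosSemidef ∧ (A i).trace = 1) :
    (∃ (t : ℕ) (F : Fin t → Matrix (Fin m) (Fin n) ℂ),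
        (∑ j, (F j)ᴴ * F j = 1) ∧ ∀ i, (∑ j, F j * A i * (F j)ᴴ) = B i) ↔
    (∃ (r s : ℕ), 0 < r ∧ 0 < s ∧ n ≤ m * s ∧
      ∃ (x : Fin r → Fin k → Fin n → ℂ) (y : Fin r → Fin k → Fin s → Fin m → ℂ)
        (U : Matrix (Fin (m * s)) (Fin (m * s)) ℂ),
        Uᴴ * U = 1 ∧ U * Uᴴ = 1 ∧
        (∀ i, A i = ∑ j, vecMulVec (x j i) (star (x j i))) ∧
        (∀ i, B i = ∑ j, ∑ t, vecMulVec (y j i t) (star (y j i t))) ∧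
        ∀ j i, U *ᵥ padVec (m * s) (x j i) = stackVec (y j i)) := by
  constructor
  · rintro ⟨t, F, hF, hFA⟩
    -- a zero Kraus operator and a zero vector are prepended only to make `s` and `r` positive
    let G : Fin (t + 1) → Matrix (Fin m) (Fin n) ℂ := Fin.cons 0 F
    have hV : (stackMatrix G)ᴴ * stackMatrix G = 1 := by
      simpa [conjTranspose_stackMatrix_mul_self, G, Fin.sum_univ_succ] using hF
    have hns : n ≤ m * (t + 1) := by
      simpa using card_le_card_of_conjTranspose_mul_self_eq_one hV
    obtain ⟨U, hU, hUV⟩ := exists_mem_unitaryGroup_submatrix_eq hV (Fin.castLE_injective hns)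
    choose x hx using fun i => (hA i).1.exists_eq_sum_vecMulVec
    let x' : Fin (n + 1) → Fin k → Fin n → ℂ := Fin.cons 0 fun j i => x i j
    have hAx' : ∀ i, A i = ∑ j, vecMulVec (x' j i) (star (x' j i)) := fun i => by
      simpa [x', Fin.sum_univ_succ] using hx i
    refine ⟨n + 1, t + 1, n.succ_pos, t.succ_pos, hns, x', fun j i s => G s *ᵥ x' j i, U,
      mem_unitaryGroup_iff'.mp hU, mem_unitaryGroup_iff.mp hU, hAx', fun i => ?_, fun j i => ?_⟩
    · rw [← hFA i, hAx' i, ← sum_mul_sum_vecMulVec_mul_conjTranspose]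
      simp [G, Fin.sum_univ_succ]
    · rw [mulVec_padVec hns, hUV, stackMatrix_mulVec]
  · rintro ⟨r, s, -, -, hns, x, y, U, hU, -, hx, hy, hUxy⟩
    let F := unstackMatrix (U.submatrix id (Fin.castLE hns))
    have hFx : ∀ j i t, F t *ᵥ x j i = y j i t := fun j i => congrFun (stackVec_injective (by
      rw [← stackMatrix_mulVec, stackMatrix_unstackMatrix, ← mulVec_padVec, hUxy]))
    refine ⟨s, F, ?_, fun i => ?_⟩
    · rw [← conjTranspose_stackMatrix_mul_self, stackMatrix_unstackMatrix]
      exact conjTranspose_submatrix_mul_self_eq_one hU (Fin.castLE_injective hns)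
    · simp only [hx i, hy i, sum_mul_sum_vecMulVec_mul_conjTranspose, hFx]

/-- Characterization of TPCP interpolation between families of density matrices via
decompositions into vectors and a unitary dilation. -/
theorem stmt_9 {n m k : ℕ}
    (A : Fin k → Matrix (Fin n) (Fin n) ℂ) (B : Fin k → Matrix (Fin m) (Fin m) ℂ)
    (hA : ∀ i, (A i).PosSemidef ∧ (A i).trace = 1)
    (hB : ∀ i, (B i).PosSemidef ∧ (B i).trace = 1) :
    (∃ (t : ℕ) (F : Fin t → Matrix (Fin m) (Fin n) ℂ),
        (∑ j, (F j)ᴴ * F j = 1) ∧ ∀ i, (∑ j, F j * A i * (F j)ᴴ) = B i) ↔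
    (∃ (r s : ℕ), 0 < r ∧ 0 < s ∧ n ≤ m * s ∧
      ∃ (x : Fin r → Fin k → Fin n → ℂ) (y : Fin r → Fin k → Fin s → Fin m → ℂ)
        (U : Matrix (Fin (m * s)) (Fin (m * s)) ℂ),
        Uᴴ * U = 1 ∧ U * Uᴴ = 1 ∧
        (∀ i, A i = ∑ j, vecMulVec (x j i) (star (x j i))) ∧
        (∀ i, B i = ∑ j, ∑ t, vecMulVec (y j i t) (star (y j i t))) ∧
        ∀ j i, U *ᵥ padVec (m * s) (x j i) = stackVec (y j i)) :=
  stmt_9_general A B hA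
end

section
/- Let x₁,…,x_k ∈ ℂⁿ and y₁,…,y_k ∈ ℂᵐ be nonzero vectors, and let X = [x₁|…|x_k] ∈ M_{n,k}(ℂ) and Y = [y₁|…|y_k] ∈ M_{m,k}(ℂ) be the matrices with these columns. There exists a completely positive map T : M_n(ℂ) → M_m(ℂ) with T(x_ix_iᴴ) = y_iy_iᴴ for i = 1,…,k if and only if there exists a positive semidefinite matrix M ∈ M_k(ℂ) with all diagonal entries equal to 1 such that every vector v ∈ ℂᵏ with (XᴴX)v = 0 also satisfies (M ∘ (YᴴY))v = 0. -/
open Matrix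
open scoped ComplexOrder

/-!
If `∑ⱼ (Fⱼ xᵢ)(Fⱼ xᵢ)ᴴ = yᵢyᵢᴴ` with `yᵢ ≠ 0`, then `Fⱼ xᵢ = cᵢⱼ yᵢ` with `∑ⱼ |cᵢⱼ|² = 1`.
Put `C = (cᵢⱼ)` with rows indexed by `j` and `Zⱼ = Y diag(Cⱼ)`. Then `M = CᴴC` has unit
diagonal, and `M ∘ YᴴY = ∑ⱼ ZⱼᴴZⱼ` is a sum of Gram matrices, whose kernel is `⋂ⱼ ker Zⱼ`.
Since `Zⱼ = FⱼX` in the forward direction, `ker XᴴX = ker X` lies in that kernel. Conversely,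
factor `M = CᴴC`. Then `ker X ⊆ ker Zⱼ` gives matrices `Fⱼ` with `FⱼX = Zⱼ`, and
`∑ⱼ (Fⱼxᵢ)(Fⱼxᵢ)ᴴ = Mᵢᵢ yᵢyᵢᴴ = yᵢyᵢᴴ`.
-/

theorem LinearMap.exists_comp_eq_of_ker_le {K V W U : Type*} [Field K] [AddCommGroup V]
    [Module K V] [AddCommGroup W] [Module K W] [AddCommGroup U] [Module K U]
    (f : V →ₗ[K] W) (g : V →ₗ[K] U) (h : LinearMap.ker f ≤ LinearMap.ker g) :
    ∃ e : W →ₗ[K] U, e ∘ₗ f = g := by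
  obtain ⟨L, hL⟩ := ((LinearMap.ker f).liftQ f le_rfl).exists_leftInverse_of_injective
    (Submodule.ker_liftQ_eq_bot' _ _ rfl)
  refine ⟨(LinearMap.ker f).liftQ g h ∘ₗ L, LinearMap.ext fun v => ?_⟩
  have hLf : L (f v) = Submodule.Quotient.mk v :=
    LinearMap.congr_fun hL (Submodule.Quotient.mk v)
  simp [hLf]

namespace Matrix

theorem exists_mul_eq_of_ker_le {K l m n : Type*} [Field K] [Fintype m] [Fintype n]
    (X : Matrix m n K) (Z : Matrix l n K)
    (h : ∀ v, X *ᵥ v = 0 → Z *ᵥ v = 0) : ∃ F : Matrix l m K, F * X = Z := by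
  classical
  obtain ⟨e, he⟩ := X.mulVecLin.exists_comp_eq_of_ker_le Z.mulVecLin h
  refine ⟨LinearMap.toMatrix' e, toLin'.injective ?_⟩
  rw [toLin'_mul, toLin'_toMatrix']
  exact he

variable {𝕜 : Type*} [RCLike 𝕜]

theorem PosSemidef.exists_eq_conjTranspose_mul_self {n : Type*} [Fintype n] {M : Matrix n n 𝕜}
    (hM : M.PosSemidef) : ∃ C : Matrix n n 𝕜, M = Cᴴ * C := by
  classical
  open scoped MatrixOrder Matrix.Norms.L2Operator in
  exact CStarAlgebra.nonneg_iff_eq_star_mul_self.mp hM.nonneg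

theorem sum_conjTranspose_mul_self_mulVec_eq_zero {ι m n : Type*} [Fintype ι] [Fintype m]
    [Fintype n] (A : ι → Matrix m n 𝕜) (v : n → 𝕜) :
    (∑ j, (A j)ᴴ * A j) *ᵥ v = 0 ↔ ∀ j, A j *ᵥ v = 0 := by
  let B : Matrix (ι × m) n 𝕜 := of fun p => A p.1 p.2
  have hB : Bᴴ * B = ∑ j, (A j)ᴴ * A j := by
    ext i l
    simp [B, mul_apply, sum_apply, Fintype.sum_prod_type]
  rw [← hB, conjTranspose_mul_self_mulVec_eq_zero]
  simp [funext_iff, B, mulVec, Prod.forall]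

theorem hadamard_conjTranspose_mul_self_eq_sum {ι m k : Type*} [Fintype ι] [Fintype m]
    [Fintype k] [DecidableEq k] (C : Matrix ι k 𝕜) (Y : Matrix m k 𝕜) :
    (Cᴴ * C) ⊙ (Yᴴ * Y) = ∑ j, (Y * diagonal (C j))ᴴ * (Y * diagonal (C j)) := by
  have hZ (d : k → 𝕜) :
      (Y * diagonal d)ᴴ * (Y * diagonal d) = diagonal (star d) * (Yᴴ * Y) * diagonal d := by
    rw [conjTranspose_mul, diagonal_conjTranspose, Matrix.mul_assoc, Matrix.mul_assoc,
      Matrix.mul_assoc]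
  ext i l
  simp only [hZ, hadamard_apply, sum_apply, mul_diagonal, diagonal_mul]
  simp only [mul_apply, conjTranspose_apply, Pi.star_apply, Finset.sum_mul]
  exact Finset.sum_congr rfl fun _ _ => by ring

theorem mul_eq_mul_diagonal_iff {k m n : Type*} [Fintype n] [Fintype k] [DecidableEq k]
    (F : Matrix m n 𝕜) (x : k → n → 𝕜) (y : k → m → 𝕜) (d : k → 𝕜) :
    F * (of fun a i => x i a : Matrix n k 𝕜) = (of fun a i => y i a : Matrix m k 𝕜) * diagonal d ↔
      ∀ i, F *ᵥ x i = d i • y i := by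
  simp only [← Matrix.ext_iff, mul_diagonal, funext_iff]
  simp [mul_apply, mulVec, dotProduct, mul_comm, forall_comm (α := m)]

theorem mul_vecMulVec_star_mul_conjTranspose {m n : Type*} [Fintype n]
    (F : Matrix m n 𝕜) (x : n → 𝕜) :
    F * vecMulVec x (star x) * Fᴴ = vecMulVec (F *ᵥ x) (star (F *ᵥ x)) := by
  rw [mul_vecMulVec, vecMulVec_mul, star_mulVec]

section RankOne

variable {ι m : Type*} [Fintype ι]

theorem sum_vecMulVec_smul_star_smul (c : ι → 𝕜) (y : m → 𝕜) :
    ∑ j, vecMulVec (c j • y) (star (c j • y)) = (star c ⬝ᵥ c) • vecMulVec y (star y) := by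
  simp only [star_smul, smul_vecMulVec, vecMulVec_smul, smul_smul, dotProduct, Finset.sum_smul,
    Pi.star_apply, mul_comm]

theorem star_dotProduct_self_eq_of_sum_vecMulVec_eq [Fintype m] {z : ι → m → 𝕜} {y : m → 𝕜}
    (h : ∑ j, vecMulVec (z j) (star (z j)) = vecMulVec y (star y)) (w : m → 𝕜) :
    star (fun j => star w ⬝ᵥ z j) ⬝ᵥ (fun j => star w ⬝ᵥ z j) =
      star (star w ⬝ᵥ y) * (star w ⬝ᵥ y) := by
  have := congrArg (fun A => star w ᵥ* A ⬝ᵥ w) h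
  simp only [vecMul_sum, sum_dotProduct, vecMul_vecMulVec, smul_dotProduct, smul_eq_mul,
    star_dotProduct y w] at this
  simpa [dotProduct, mul_comm] using this

theorem exists_eq_smul_of_sum_vecMulVec_eq [Fintype m] {z : ι → m → 𝕜} {y : m → 𝕜} (hy : y ≠ 0)
    (h : ∑ j, vecMulVec (z j) (star (z j)) = vecMulVec y (star y)) :
    ∃ c : ι → 𝕜, (∀ j, z j = c j • y) ∧ star c ⬝ᵥ c = 1 := by
  have orth : ∀ w, star w ⬝ᵥ y = 0 → ∀ j, star w ⬝ᵥ z j = 0 := fun w hw => by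
    have := star_dotProduct_self_eq_of_sum_vecMulVec_eq h w
    rw [hw, mul_zero] at this
    exact congrFun (dotProduct_star_self_eq_zero.mp this)
  set β := star y ⬝ᵥ y
  have hβ : β ≠ 0 := mt dotProduct_star_self_eq_zero.mp hy
  set c : ι → 𝕜 := fun j => (star y ⬝ᵥ z j) / β
  have hz : ∀ j, z j = c j • y := fun j => by
    set w := z j - c j • y with hw
    have hyw : star y ⬝ᵥ w = 0 := by
      rw [hw, dotProduct_sub, dotProduct_smul, smul_eq_mul, div_mul_cancel₀ _ hβ, sub_self]
    have hwy : star w ⬝ᵥ y = 0 := by rw [star_dotProduct, hyw, star_zero]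
    have hww : star w ⬝ᵥ w = 0 := by
      rw [hw, dotProduct_sub, dotProduct_smul, ← hw, orth w hwy j, hwy, smul_zero, sub_zero]
    exact sub_eq_zero.mp (dotProduct_star_self_eq_zero.mp hww)
  refine ⟨c, hz, mul_left_cancel₀ (mul_ne_zero (star_ne_zero.mpr hβ) hβ) ?_⟩
  have key := star_dotProduct_self_eq_of_sum_vecMulVec_eq h y
  have ha : (fun j => star y ⬝ᵥ z j) = β • c := funext fun j => by
    simp [c, mul_div_cancel₀ _ hβ]
  rw [ha, star_smul, smul_dotProduct, dotProduct_smul, smul_eq_mul, smul_eq_mul] at key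
  rw [mul_one, mul_assoc]
  exact key

end RankOne

end Matrix

theorem stmt_17_general {n m k : ℕ} (x : Fin k → Fin n → ℂ) (y : Fin k → Fin m → ℂ)
    (hy : ∀ i, y i ≠ 0)
    (X : Matrix (Fin n) (Fin k) ℂ) (hX : X = Matrix.of fun a i => x i a)
    (Y : Matrix (Fin m) (Fin k) ℂ) (hY : Y = Matrix.of fun a i => y i a) :
    (∃ (r : ℕ) (F : Fin r → Matrix (Fin m) (Fin n) ℂ),
        ∀ i, (∑ j, F j * vecMulVec (x i) (star (x i)) * (F j)ᴴ) =
          vecMulVec (y i) (star (y i))) ↔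
    (∃ M : Matrix (Fin k) (Fin k) ℂ, M.PosSemidef ∧ (∀ i, M i i = 1) ∧
        ∀ v : Fin k → ℂ, (Xᴴ * X) *ᵥ v = 0 → Matrix.hadamard M (Yᴴ * Y) *ᵥ v = 0) := by
  have hcols (F : Matrix (Fin m) (Fin n) ℂ) (d : Fin k → ℂ) :
      F * X = Y * diagonal d ↔ ∀ i, F *ᵥ x i = d i • y i :=
    hX ▸ hY ▸ mul_eq_mul_diagonal_iff F x y d
  simp_rw [mul_vecMulVec_star_mul_conjTranspose]
  constructor
  · rintro ⟨r, F, hF⟩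
    choose c hc hnorm using fun i => exists_eq_smul_of_sum_vecMulVec_eq (hy i) (hF i)
    let C : Matrix (Fin r) (Fin k) ℂ := of fun j i => c i j
    refine ⟨Cᴴ * C, posSemidef_conjTranspose_mul_self C, hnorm, fun v hv => ?_⟩
    rw [hadamard_conjTranspose_mul_self_eq_sum, sum_conjTranspose_mul_self_mulVec_eq_zero]
    intro j
    rw [← (hcols (F j) (C j)).mpr fun i => hc i j, ← mulVec_mulVec,
      (conjTranspose_mul_self_mulVec_eq_zero X v).mp hv, mulVec_zero]
  · rintro ⟨M, hM, hdiag, hker⟩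
    obtain ⟨C, rfl⟩ := hM.exists_eq_conjTranspose_mul_self
    rw [hadamard_conjTranspose_mul_self_eq_sum] at hker
    choose F hF using fun j => exists_mul_eq_of_ker_le X (Y * diagonal (C j)) fun v hv =>
      (sum_conjTranspose_mul_self_mulVec_eq_zero _ v).mp
        (hker v (by rw [← mulVec_mulVec, hv, mulVec_zero])) j
    refine ⟨k, F, fun i => ?_⟩
    simp_rw [fun j => (hcols (F j) (C j)).mp (hF j) i, sum_vecMulVec_smul_star_smul]
    rw [show (star fun j => C j i) ⬝ᵥ (fun j => C j i) = 1 from hdiag i, one_smul]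

/-- A completely positive map sending `xᵢxᵢᴴ ↦ yᵢyᵢᴴ` exists iff there is a positive
semidefinite `M` with unit diagonal such that `ker XᴴX ⊆ ker (M ∘ YᴴY)`. -/
theorem stmt_17 {n m k : ℕ} (x : Fin k → Fin n → ℂ) (y : Fin k → Fin m → ℂ)
    (hx : ∀ i, x i ≠ 0) (hy : ∀ i, y i ≠ 0)
    (X : Matrix (Fin n) (Fin k) ℂ) (hX : X = Matrix.of fun a i => x i a)
    (Y : Matrix (Fin m) (Fin k) ℂ) (hY : Y = Matrix.of fun a i => y i a) :
    (∃ (r : ℕ) (F : Fin r → Matrix (Fin m) (Fin n) ℂ),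
        ∀ i, (∑ j, F j * vecMulVec (x i) (star (x i)) * (F j)ᴴ) =
          vecMulVec (y i) (star (y i))) ↔
    (∃ M : Matrix (Fin k) (Fin k) ℂ, M.PosSemidef ∧ (∀ i, M i i = 1) ∧
        ∀ v : Fin k → ℂ, (Xᴴ * X) *ᵥ v = 0 → Matrix.hadamard M (Yᴴ * Y) *ᵥ v = 0) :=
  stmt_17_general x y hy X hX Y hY
end
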